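/- (Perturbative expansion of correlation functions in the coupling parameters.) With the setup of the {v,h}⁴-theory: M > 0, ν a finite Borel measure on L²(ℤ_p^N) × L²(ℤ_p^N) carried by B^∞_M × B^∞_M, a, b ∈ L^∞(ℤ_p^N), w ∈ L^∞(ℤ_p^N × ℤ_p^N), E^spin(v,h) = −⟨h, Wv⟩ − ⟨a, v⟩ − ⟨b, h⟩, U(v) = ∫ v⁴ dμ, V(h) = ∫ h⁴ dμ, and c, d ∈ ℝ. Then for all m, n ≥ 0 and φ_1, …, φ_m, θ_1, …, θ_n ∈ L²(ℤ_p^N), the iterated partial derivative ∂_{t_n} ⋯ ∂_{t_1} ∂_{s_m} ⋯ ∂_{s_1}, at (s,t) = (0,0), of (s,t) ↦ ∫ exp(−E^spin(v,h) − c U(v) − d V(h) + Σ_i s_i ⟨φ_i, v⟩ + Σ_j t_j ⟨θ_j, h⟩) dν(v,h) exists and equals Σ_{i=0}^∞ Σ_{j=0}^∞ ((−1)^{i+j} c^i d^j / (i! j!)) ∫ ∏_{k=1}^m ⟨φ_k, v⟩ ∏_{l=1}^n ⟨θ_l, h⟩ U(v)^i V(h)^j exp(−E^spin(v,h)) dν(v,h),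 the double series converging absolutely. -/

import Mathlib

open MeasureTheory ENNReal Real

/-- The space `ℤ_p^N`. -/
abbrev PSpace (p : ℕ) [Fact p.Prime] (N : ℕ) := Fin N → ℤ_[p]

/-- The spin-glass energy `E^spin(v,h) = −⟨h, Wv⟩ − ⟨a, v⟩ − ⟨b, h⟩`. -/
noncomputable def espin {p : ℕ} [Fact p.Prime] {N : ℕ}
    [MeasurableSpace (PSpace p N)] (μ : Measure (PSpace p N))
    (a b : PSpace p N → ℝ) (w : PSpace p N × PSpace p N → ℝ)
    (v h : PSpace p N → ℝ) : ℝ :=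
  -(∫ x, h x * (∫ y, w (x, y) * v y ∂μ) ∂μ) - (∫ x, a x * v x ∂μ) - ∫ x, b x * h x ∂μ

/-- The quartic self-interaction `U(v) = ∫ v(x)⁴ dμ(x)`. -/
noncomputable def quart {p : ℕ} [Fact p.Prime] {N : ℕ}
    [MeasurableSpace (PSpace p N)] (μ : Measure (PSpace p N))
    (v : PSpace p N → ℝ) : ℝ :=
  ∫ x, v x ^ 4 ∂μ

/-- Partial derivative in the `i`-th coordinate of the first block of variables. -/
noncomputable def pdFst {m n : ℕ} (i : Fin m) (F : (Fin m → ℝ) × (Fin n → ℝ) → ℝ) :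
    (Fin m → ℝ) × (Fin n → ℝ) → ℝ :=
  fun st => deriv (fun r => F (Function.update st.1 i r, st.2)) (st.1 i)

/-- Partial derivative in the `j`-th coordinate of the second block of variables. -/
noncomputable def pdSnd {m n : ℕ} (j : Fin n) (F : (Fin m → ℝ) × (Fin n → ℝ) → ℝ) :
    (Fin m → ℝ) × (Fin n → ℝ) → ℝ :=
  fun st => deriv (fun r => F (st.1, Function.update st.2 j r)) (st.2 j)

/-- The iterated partial derivative `∂_{t_n} ⋯ ∂_{t_1} ∂_{s_m} ⋯ ∂_{s_1} F`. -/
noncomputable def iterPD2 {m n : ℕ} (F : (Fin m → ℝ) × (Fin n → ℝ) → ℝ) :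
    (Fin m → ℝ) × (Fin n → ℝ) → ℝ :=
  (List.finRange n).foldl (fun G j => pdSnd j G)
    ((List.finRange m).foldl (fun G i => pdFst i G) F)

/-!
On the support of `ν` both fields lie in the `L^∞`-ball of radius `M`, so `‖v‖₂, ‖h‖₂ ≤ M` and
every quantity in the exponent is bounded: `E^spin`, `U`, `V` and the pairings `⟨φ_i, v⟩`,
`⟨θ_j, h⟩`. Hence each derivative in a source `s_i` or `t_j` may be taken under the integral
sign (dominated convergence) and brings down the factor `⟨φ_i, v⟩` or `⟨θ_j, h⟩`. Expanding
`exp (-c U - d V)` as a double power series, the `(i, j)` term is bounded by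
`(|c| M⁴)^i (|d| M⁴)^j / (i! j!)` times an integrable function, so the series converges in
`L¹(ν)` and may be integrated term by term.

The delicate point is measurability in `(v, h)`. `E^spin` is continuous on `L² × L²`, because
`(v, h) ↦ ⟨h, W v⟩` is a bounded bilinear form. `U` is not continuous on `L²` (off `L⁴` the
integral `∫ v⁴` is even a junk value), but it is Lipschitz on the `L^∞`-ball, and this ball is a
retract of `L²` under pointwise clamping to `[-M, M]`; since `ν` is carried by the ball, this
suffices.
-/

open scoped InnerProductSpace

theorem sum_update_mul {ι R : Type*} [Fintype ι] [DecidableEq ι] [CommRing R] (s g : ι → R)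
    (i : ι) (r : R) :
    ∑ k, Function.update s i r k * g k = ∑ k, s k * g k + (r - s i) * g i := by
  have h : ∀ t : ι → R, ∑ k, t k * g k = t i * g i + ∑ k ∈ Finset.univ.erase i, t k * g k :=
    fun t => (Finset.add_sum_erase _ _ (Finset.mem_univ i)).symm
  rw [h, h s, Function.update_self, Finset.sum_congr rfl fun k hk => by
    rw [Function.update_of_ne (Finset.ne_of_mem_erase hk)]]
  ring

theorem abs_prod_le_prod_of_abs_le {ι : Type*} (s : Finset ι) {f A : ι → ℝ}
    (h : ∀ i, |f i| ≤ A i) : |∏ i ∈ s, f i| ≤ ∏ i ∈ s, A i := by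
  rw [Finset.abs_prod]
  exact Finset.prod_le_prod (fun _ _ => abs_nonneg _) fun i _ => h i

section ParametricIntegrals

variable {Ω : Type*} [MeasurableSpace Ω] {ν : Measure Ω}

theorem hasDerivAt_integral_mul_exp_sub_mul {G A : Ω → ℝ} {C : ℝ} (hG : Integrable G ν)
    (hA : AEStronglyMeasurable A ν) (hAC : ∀ᵐ x ∂ν, |A x| ≤ C) (r₀ : ℝ) :
    HasDerivAt (fun r => ∫ x, G x * exp ((r - r₀) * A x) ∂ν) (∫ x, G x * A x ∂ν) r₀ := by
  have hF : ∀ r : ℝ, AEStronglyMeasurable (fun x => G x * exp ((r - r₀) * A x)) ν := fun r =>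
    hG.1.mul (continuous_exp.comp_aestronglyMeasurable (hA.const_mul _))
  have key := hasDerivAt_integral_of_dominated_loc_of_deriv_le (𝕜 := ℝ) (x₀ := r₀)
    (F' := fun r x => G x * A x * exp ((r - r₀) * A x)) (bound := fun x => |G x| * C * exp C)
    (Metric.ball_mem_nhds r₀ one_pos) (.of_forall hF) (by simpa using hG)
    ((hG.1.mul hA).mul (continuous_exp.comp_aestronglyMeasurable (hA.const_mul _))) ?_
    ((hG.abs.mul_const C).mul_const _) ?_
  · simpa using key.2
  · filter_upwards [hAC] with x hx r hr
    have hr : |r - r₀| ≤ 1 := (Real.dist_eq r r₀ ▸ Metric.mem_ball.1 hr).le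
    have hC : 0 ≤ C := (abs_nonneg _).trans hx
    have hexp : exp ((r - r₀) * A x) ≤ exp C := exp_le_exp.2 <| (le_abs_self _).trans <| by
      rw [abs_mul]; nlinarith [abs_nonneg (r - r₀), abs_nonneg (A x)]
    rw [norm_mul, norm_mul, Real.norm_of_nonneg (exp_pos _).le, Real.norm_eq_abs,
      Real.norm_eq_abs]
    gcongr
  · refine .of_forall fun x r _ => ?_
    have := (((hasDerivAt_id r).sub_const r₀).mul_const (A x)).exp.const_mul (G x)
    simpa [mul_assoc, mul_comm, mul_left_comm] using this

theorem integrable_mul_list_prod {ι : Type*} {γ : ι → Ω → ℝ}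
    (hγ : ∀ i {G : Ω → ℝ}, Integrable G ν → Integrable (fun x => G x * γ i x) ν) :
    ∀ (L : List ι) {G : Ω → ℝ}, Integrable G ν →
      Integrable (fun x => G x * (L.map (γ · x)).prod) ν
  | [], G, hG => by simpa using hG
  | i :: L, G, hG => by
    simpa [mul_assoc] using integrable_mul_list_prod hγ L (hγ i hG)

theorem foldl_integral_mul_exp {X ι : Type*} (S : X → Ω → ℝ) (D : ι → (X → ℝ) → X → ℝ)
    {γ : ι → Ω → ℝ} (hγ : ∀ i {G : Ω → ℝ}, Integrable G ν → Integrable (fun x => G x * γ i x) ν)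
    (hD : ∀ i {G : Ω → ℝ}, Integrable G ν →
      D i (fun s => ∫ x, G x * exp (S s x) ∂ν) = fun s => ∫ x, G x * γ i x * exp (S s x) ∂ν) :
    ∀ (L : List ι) {G : Ω → ℝ}, Integrable G ν →
      L.foldl (fun F i => D i F) (fun s => ∫ x, G x * exp (S s x) ∂ν)
        = fun s => ∫ x, G x * (L.map (γ · x)).prod * exp (S s x) ∂ν
  | [], G, hG => by simp
  | i :: L, G, hG => by
    rw [List.foldl_cons, hD i hG, foldl_integral_mul_exp S D hγ hD L (hγ i hG)]
    simp [mul_assoc]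

theorem integrable_exp_of_ae_le [IsFiniteMeasure ν] {F : Ω → ℝ} {L : ℝ}
    (hF : AEStronglyMeasurable F ν) (hFL : ∀ᵐ x ∂ν, F x ≤ L) :
    Integrable (fun x => exp (F x)) ν :=
  .of_bound (continuous_exp.comp_aestronglyMeasurable hF) (exp L) <| hFL.mono fun x hx => by
    rwa [Real.norm_of_nonneg (exp_pos _).le, exp_le_exp]

end ParametricIntegrals

section SourceTerm

variable {Ω : Type*} [MeasurableSpace Ω] {ν : Measure Ω} {m n : ℕ}
  {α : Fin m → Ω → ℝ} {β : Fin n → Ω → ℝ}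

variable (α β) in
def sourceTerm (st : (Fin m → ℝ) × (Fin n → ℝ)) (x : Ω) : ℝ :=
  ∑ k, st.1 k * α k x + ∑ l, st.2 l * β l x

omit [MeasurableSpace Ω] in
theorem sourceTerm_update_fst (st : (Fin m → ℝ) × (Fin n → ℝ)) (i : Fin m) (r : ℝ) (x : Ω) :
    sourceTerm α β (Function.update st.1 i r, st.2) x
      = sourceTerm α β st x + (r - st.1 i) * α i x := by
  simp only [sourceTerm, sum_update_mul]
  ring

omit [MeasurableSpace Ω] in
theorem sourceTerm_update_snd (st : (Fin m → ℝ) × (Fin n → ℝ)) (j : Fin n) (r : ℝ) (x : Ω) :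
    sourceTerm α β (st.1, Function.update st.2 j r) x
      = sourceTerm α β st x + (r - st.2 j) * β j x := by
  simp only [sourceTerm, sum_update_mul]
  ring

omit [MeasurableSpace Ω] in
@[simp]
theorem sourceTerm_zero (x : Ω) : sourceTerm α β (0, 0) x = 0 := by
  simp [sourceTerm]

variable {A : Fin m → ℝ} {B : Fin n → ℝ}
  (hαm : ∀ k, AEStronglyMeasurable (α k) ν) (hβm : ∀ l, AEStronglyMeasurable (β l) ν)
  (hαA : ∀ k, ∀ᵐ x ∂ν, |α k x| ≤ A k) (hβB : ∀ l, ∀ᵐ x ∂ν, |β l x| ≤ B l)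
include hαm hβm hαA hβB

theorem integrable_mul_exp_sourceTerm {G : Ω → ℝ} (hG : Integrable G ν)
    (st : (Fin m → ℝ) × (Fin n → ℝ)) :
    Integrable (fun x => G x * exp (sourceTerm α β st x)) ν := by
  have hS : ∀ᵐ x ∂ν, sourceTerm α β st x ≤ ∑ k, |st.1 k| * A k + ∑ l, |st.2 l| * B l := by
    filter_upwards [ae_all_iff.2 hαA, ae_all_iff.2 hβB] with x hα hβ
    refine add_le_add (Finset.sum_le_sum fun k _ => ?_) (Finset.sum_le_sum fun l _ => ?_)
    · exact (le_abs_self _).trans (by rw [abs_mul]; gcongr; exact hα k)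
    · exact (le_abs_self _).trans (by rw [abs_mul]; gcongr; exact hβ l)
  refine (hG.bdd_mul (c := exp (∑ k, |st.1 k| * A k + ∑ l, |st.2 l| * B l)) ?_ ?_).congr
    (.of_forall fun x => mul_comm _ _)
  · exact continuous_exp.comp_aestronglyMeasurable
      ((Finset.aestronglyMeasurable_fun_sum _ fun k _ => (hαm k).const_mul _).add
        (Finset.aestronglyMeasurable_fun_sum _ fun l _ => (hβm l).const_mul _))
  · filter_upwards [hS] with x hx
    rw [Real.norm_of_nonneg (exp_pos _).le]
    exact exp_le_exp.2 hx

theorem pdFst_integral_mul_exp_sourceTerm {G : Ω → ℝ} (hG : Integrable G ν) (i : Fin m) :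
    pdFst i (fun st => ∫ x, G x * exp (sourceTerm α β st x) ∂ν)
      = fun st => ∫ x, G x * α i x * exp (sourceTerm α β st x) ∂ν := by
  funext st
  have h := hasDerivAt_integral_mul_exp_sub_mul
    (integrable_mul_exp_sourceTerm hαm hβm hαA hβB hG st) (hαm i) (hαA i) (st.1 i)
  simp only [pdFst, sourceTerm_update_fst, exp_add, ← mul_assoc, h.deriv]
  simp only [mul_right_comm]

theorem pdSnd_integral_mul_exp_sourceTerm {G : Ω → ℝ} (hG : Integrable G ν) (j : Fin n) :
    pdSnd j (fun st => ∫ x, G x * exp (sourceTerm α β st x) ∂ν)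
      = fun st => ∫ x, G x * β j x * exp (sourceTerm α β st x) ∂ν := by
  funext st
  have h := hasDerivAt_integral_mul_exp_sub_mul
    (integrable_mul_exp_sourceTerm hαm hβm hαA hβB hG st) (hβm j) (hβB j) (st.2 j)
  simp only [pdSnd, sourceTerm_update_snd, exp_add, ← mul_assoc, h.deriv]
  simp only [mul_right_comm]

theorem iterPD2_integral_mul_exp_sourceTerm {G : Ω → ℝ} (hG : Integrable G ν) :
    iterPD2 (fun st => ∫ x, G x * exp (sourceTerm α β st x) ∂ν)
      = fun st => ∫ x, G x * ((∏ k, α k x) * ∏ l, β l x) * exp (sourceTerm α β st x) ∂ν := by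
  have hα : ∀ i {G : Ω → ℝ}, Integrable G ν → Integrable (fun x => G x * α i x) ν :=
    fun i _ hG => hG.mul_bdd (hαm i) (hαA i)
  have hβ : ∀ j {G : Ω → ℝ}, Integrable G ν → Integrable (fun x => G x * β j x) ν :=
    fun j _ hG => hG.mul_bdd (hβm j) (hβB j)
  rw [iterPD2, foldl_integral_mul_exp _ _ hα
      (fun i _ hG => pdFst_integral_mul_exp_sourceTerm hαm hβm hαA hβB hG i) _ hG,
    foldl_integral_mul_exp _ _ hβ
      (fun j _ hG => pdSnd_integral_mul_exp_sourceTerm hαm hβm hαA hβB hG j) _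
      (integrable_mul_list_prod hα _ hG)]
  simp only [Fin.prod_univ_def, mul_assoc]

end SourceTerm

open Nat in
theorem summable_norm_pow_div_factorial (y : ℝ) : Summable fun i => ‖y ^ i / (i ! : ℝ)‖ := by
  simpa [abs_div] using Real.summable_pow_div_factorial |y|

open Nat in
theorem mul_exp_neg_mul_sub_mul_eq_tsum (g u v c d : ℝ) :
    g * exp (-(c * u) - d * v) = ∑' ij : ℕ × ℕ, (-1) ^ (ij.1 + ij.2) * c ^ ij.1 * d ^ ij.2 /
      (ij.1 ! * ij.2 !) * (g * (u ^ ij.1 * v ^ ij.2)) := by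
  rw [sub_eq_add_neg, exp_add, exp_eq_exp_ℝ, NormedSpace.exp_eq_tsum_div,
    tsum_mul_tsum_of_summable_norm (summable_norm_pow_div_factorial _)
      (summable_norm_pow_div_factorial _), ← tsum_mul_left]
  refine tsum_congr fun ij => ?_
  simp only [pow_add, neg_pow (c * u), neg_pow (d * v)]
  ring

section Expansion

variable {Ω : Type*} [MeasurableSpace Ω] {ν : Measure Ω}

open Nat in
theorem integral_mul_exp_neg_mul_sub_mul_eq_tsum {G U V : Ω → ℝ} {C : ℝ} (hG : Integrable G ν)
    (hU : AEStronglyMeasurable U ν) (hV : AEStronglyMeasurable V ν)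
    (hUC : ∀ᵐ x ∂ν, |U x| ≤ C) (hVC : ∀ᵐ x ∂ν, |V x| ≤ C) (c d : ℝ) :
    Summable (fun ij : ℕ × ℕ => |(-1) ^ (ij.1 + ij.2) * c ^ ij.1 * d ^ ij.2 / (ij.1 ! * ij.2 !) *
        ∫ x, G x * (U x ^ ij.1 * V x ^ ij.2) ∂ν|) ∧
      ∫ x, G x * exp (-(c * U x) - d * V x) ∂ν
        = ∑' ij : ℕ × ℕ, (-1) ^ (ij.1 + ij.2) * c ^ ij.1 * d ^ ij.2 / (ij.1 ! * ij.2 !) *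
          ∫ x, G x * (U x ^ ij.1 * V x ^ ij.2) ∂ν := by
  set F : ℕ × ℕ → Ω → ℝ := fun ij x => (-1) ^ (ij.1 + ij.2) * c ^ ij.1 * d ^ ij.2 /
    (ij.1 ! * ij.2 !) * (G x * (U x ^ ij.1 * V x ^ ij.2))
  have hF_le : ∀ ij, ∀ᵐ x ∂ν,
      ‖F ij x‖ ≤ (|c| * C) ^ ij.1 / ij.1 ! * ((|d| * C) ^ ij.2 / ij.2 !) * |G x| := by
    intro ij
    filter_upwards [hUC, hVC] with x hUx hVx
    have hUi : |U x| ^ ij.1 ≤ C ^ ij.1 := pow_le_pow_left₀ (abs_nonneg _) hUx _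
    have hVj : |V x| ^ ij.2 ≤ C ^ ij.2 := pow_le_pow_left₀ (abs_nonneg _) hVx _
    simp only [F, Real.norm_eq_abs, abs_mul, abs_div, abs_pow, abs_neg, abs_one, one_pow,
      one_mul, Nat.abs_cast, mul_pow]
    calc _ ≤ |c| ^ ij.1 * |d| ^ ij.2 / (ij.1 ! * ij.2 !) * (|G x| * (C ^ ij.1 * C ^ ij.2)) := by
          gcongr
          exact (pow_nonneg (abs_nonneg _) _).trans hUi
      _ = _ := by ring
  have hF_int : ∀ ij, Integrable (F ij) ν := fun ij =>
    (hG.abs.const_mul _).mono' ((hG.1.mul ((hU.pow _).mul (hV.pow _))).const_mul _) (hF_le ij)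
  have hF_sum : Summable fun ij => ∫ x, ‖F ij x‖ ∂ν := by
    refine .of_nonneg_of_le (fun ij => integral_nonneg fun _ => norm_nonneg _) (fun ij => ?_)
      ((summable_mul_of_summable_norm (summable_norm_pow_div_factorial (|c| * C))
        (summable_norm_pow_div_factorial (|d| * C))).mul_right (∫ x, |G x| ∂ν))
    rw [← integral_const_mul]
    exact integral_mono_ae (hF_int ij).norm (hG.abs.const_mul _) (hF_le ij)
  refine ⟨.of_nonneg_of_le (fun _ => abs_nonneg _) (fun ij => ?_) hF_sum, ?_⟩
  · rw [← integral_const_mul]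
    exact abs_integral_le_integral_abs
  · calc ∫ x, G x * exp (-(c * U x) - d * V x) ∂ν = ∫ x, ∑' ij, F ij x ∂ν :=
          integral_congr_ae (.of_forall fun x => mul_exp_neg_mul_sub_mul_eq_tsum _ _ _ c d)
      _ = _ := (integral_tsum_of_summable_integral_norm hF_int hF_sum).symm
      _ = _ := tsum_congr fun ij => integral_const_mul _ _

open Nat in
theorem iterPD2_integral_exp_eq_tsum [IsFiniteMeasure ν] {m n : ℕ} {E U V : Ω → ℝ}
    {α : Fin m → Ω → ℝ} {β : Fin n → Ω → ℝ} {K C : ℝ} {A : Fin m → ℝ} {B : Fin n → ℝ}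
    (hEm : AEStronglyMeasurable E ν) (hUm : AEStronglyMeasurable U ν)
    (hVm : AEStronglyMeasurable V ν) (hαm : ∀ k, AEStronglyMeasurable (α k) ν)
    (hβm : ∀ l, AEStronglyMeasurable (β l) ν) (hEK : ∀ᵐ x ∂ν, E x ≤ K)
    (hUC : ∀ᵐ x ∂ν, |U x| ≤ C) (hVC : ∀ᵐ x ∂ν, |V x| ≤ C)
    (hαA : ∀ k, ∀ᵐ x ∂ν, |α k x| ≤ A k) (hβB : ∀ l, ∀ᵐ x ∂ν, |β l x| ≤ B l) (c d : ℝ) :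
    Summable (fun ij : ℕ × ℕ => |(-1) ^ (ij.1 + ij.2) * c ^ ij.1 * d ^ ij.2 / (ij.1 ! * ij.2 !) *
        ∫ x, ((∏ k, α k x) * ∏ l, β l x) * (U x ^ ij.1 * V x ^ ij.2 * exp (E x)) ∂ν|) ∧
      iterPD2 (fun st : (Fin m → ℝ) × (Fin n → ℝ) => ∫ x, exp (E x - c * U x - d * V x
          + (∑ k, st.1 k * α k x) + ∑ l, st.2 l * β l x) ∂ν) (0, 0)
        = ∑' ij : ℕ × ℕ, (-1) ^ (ij.1 + ij.2) * c ^ ij.1 * d ^ ij.2 / (ij.1 ! * ij.2 !) *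
          ∫ x, ((∏ k, α k x) * ∏ l, β l x) * (U x ^ ij.1 * V x ^ ij.2 * exp (E x)) ∂ν := by
  have hG : Integrable (fun x => exp (E x - c * U x - d * V x)) ν := by
    refine integrable_exp_of_ae_le ((hEm.sub (hUm.const_mul c)).sub (hVm.const_mul d))
      (L := K + |c| * C + |d| * C) ?_
    filter_upwards [hEK, hUC, hVC] with x hE hU hV
    have hcU : -(c * U x) ≤ |c| * C := (neg_le_abs _).trans (by rw [abs_mul]; gcongr)
    have hdV : -(d * V x) ≤ |d| * C := (neg_le_abs _).trans (by rw [abs_mul]; gcongr)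
    linarith
  have hP : Integrable (fun x => (∏ k, α k x) * (∏ l, β l x) * exp (E x)) ν := by
    refine Integrable.bdd_mul (c := (∏ k, A k) * ∏ l, B l)
      (integrable_exp_of_ae_le hEm hEK)
      ((Finset.aestronglyMeasurable_fun_prod _ fun k _ => hαm k).mul
        (Finset.aestronglyMeasurable_fun_prod _ fun l _ => hβm l)) ?_
    filter_upwards [ae_all_iff.2 hαA, ae_all_iff.2 hβB] with x hα hβ
    have hα' := abs_prod_le_prod_of_abs_le Finset.univ hα
    rw [Real.norm_eq_abs, abs_mul]
    exact mul_le_mul hα' (abs_prod_le_prod_of_abs_le Finset.univ hβ) (abs_nonneg _)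
      ((abs_nonneg _).trans hα')
  obtain ⟨hsum, hseries⟩ := integral_mul_exp_neg_mul_sub_mul_eq_tsum hP hUm hVm hUC hVC c d
  have hreorder : ∀ ij : ℕ × ℕ,
      ∫ x, (∏ k, α k x) * (∏ l, β l x) * exp (E x) * (U x ^ ij.1 * V x ^ ij.2) ∂ν
        = ∫ x, ((∏ k, α k x) * ∏ l, β l x) * (U x ^ ij.1 * V x ^ ij.2 * exp (E x)) ∂ν :=
    fun ij => integral_congr_ae (.of_forall fun x => by ring)
  simp only [hreorder] at hsum hseries
  refine ⟨hsum, ?_⟩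
  have hsplit : ∀ (st : (Fin m → ℝ) × (Fin n → ℝ)) x, exp (E x - c * U x - d * V x
      + (∑ k, st.1 k * α k x) + ∑ l, st.2 l * β l x)
        = exp (E x - c * U x - d * V x) * exp (sourceTerm α β st x) := by
    intro st x
    rw [sourceTerm, ← exp_add, add_assoc]
  simp only [hsplit, iterPD2_integral_mul_exp_sourceTerm hαm hβm hαA hβB hG, sourceTerm_zero,
    exp_zero, mul_one, ← hseries]
  refine integral_congr_ae (.of_forall fun x => ?_)
  simp only [sub_eq_add_neg, exp_add]
  ring

end Expansion

section L2Pairing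

variable {X : Type*} [MeasurableSpace X] {μ : Measure X}

theorem Lp.ae_norm_le_norm_top {E : Type*} [NormedAddCommGroup E] (u : Lp E ⊤ μ) :
    ∀ᵐ x ∂μ, ‖u x‖ ≤ ‖u‖ := by
  have hu : eLpNormEssSup u μ ≠ ⊤ := eLpNorm_exponent_top (f := ⇑u) ▸ Lp.eLpNorm_ne_top u
  filter_upwards [ae_le_eLpNormEssSup (f := ⇑u) (μ := μ)] with x hx
  simpa [Lp.norm_def] using ENNReal.toReal_mono hu hx

theorem integral_mul_eq_inner {g : X → ℝ} (hg : MemLp g 2 μ) (v : Lp ℝ 2 μ) :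
    ∫ x, g x * v x ∂μ = ⟪hg.toLp g, v⟫_ℝ := by
  rw [L2.inner_def]
  refine integral_congr_ae ?_
  filter_upwards [hg.coeFn_toLp] with x hx
  simp [hx, mul_comm]

theorem continuous_integral_mul {g : X → ℝ} (hg : MemLp g 2 μ) :
    Continuous fun v : Lp ℝ 2 μ => ∫ x, g x * v x ∂μ := by
  simp only [integral_mul_eq_inner hg]
  fun_prop

theorem abs_integral_mul_le (φ v : Lp ℝ 2 μ) : |∫ x, φ x * v x ∂μ| ≤ ‖φ‖ * ‖v‖ := by
  simpa [integral_mul_eq_inner (Lp.memLp φ)] using abs_real_inner_le_norm φ v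

variable [IsProbabilityMeasure μ]

theorem integral_abs_le_norm (v : Lp ℝ 2 μ) : ∫ x, |v x| ∂μ ≤ ‖v‖ := by
  have hm := Lp.aestronglyMeasurable v
  rw [integral_congr_ae (.of_forall fun x => (Real.norm_eq_abs (v x)).symm),
    integral_norm_eq_lintegral_enorm hm, Lp.norm_def, ← eLpNorm_one_eq_lintegral_enorm]
  refine ENNReal.toReal_mono (Lp.eLpNorm_ne_top v) ?_
  exact eLpNorm_le_eLpNorm_of_exponent_le one_le_two hm

theorem abs_integral_mul_le_of_ae_abs_le {f : X → ℝ} {C : ℝ} (hf : ∀ᵐ x ∂μ, |f x| ≤ C)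
    (v : Lp ℝ 2 μ) : |∫ x, f x * v x ∂μ| ≤ C * ‖v‖ := by
  have hC : 0 ≤ C := hf.exists.elim fun x hx => (abs_nonneg _).trans hx
  calc |∫ x, f x * v x ∂μ| ≤ ∫ x, C * |v x| ∂μ := by
        rw [← Real.norm_eq_abs]
        refine norm_integral_le_of_norm_le
          (((Lp.memLp v).integrable one_le_two).abs.const_mul _) ?_
        filter_upwards [hf] with x hx
        rw [norm_mul, Real.norm_eq_abs, Real.norm_eq_abs]
        gcongr
    _ ≤ C * ‖v‖ := by
        rw [integral_const_mul]
        gcongr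
        exact integral_abs_le_norm v

end L2Pairing

section KernelForm

variable {X : Type*} [MeasurableSpace X] {μ : Measure X} [IsProbabilityMeasure μ]
  (w : Lp ℝ ⊤ (μ.prod μ))

theorem ae_integrable_kernel_mul (v : Lp ℝ 2 μ) :
    ∀ᵐ x ∂μ, Integrable (fun y => w (x, y) * v y) μ := by
  have hm : AEStronglyMeasurable (fun z : X × X => w z * v z.2) (μ.prod μ) :=
    (Lp.aestronglyMeasurable w).mul ((Lp.aestronglyMeasurable v).comp_quasiMeasurePreserving
      Measure.quasiMeasurePreserving_snd)
  filter_upwards [hm.prodMk_left, Measure.ae_ae_of_ae_prod (Lp.ae_norm_le_norm_top w)]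
    with x hmx hwx
  refine (((Lp.memLp v).integrable one_le_two).norm.const_mul ‖w‖).mono' hmx ?_
  filter_upwards [hwx] with y hy
  rw [norm_mul]
  gcongr

theorem aestronglyMeasurable_integral_kernel_mul (v : Lp ℝ 2 μ) :
    AEStronglyMeasurable (fun x => ∫ y, w (x, y) * v y ∂μ) μ :=
  ((Lp.aestronglyMeasurable w).mul ((Lp.aestronglyMeasurable v).comp_quasiMeasurePreserving
    Measure.quasiMeasurePreserving_snd)).integral_prod_right'

theorem ae_abs_integral_kernel_mul_le (v : Lp ℝ 2 μ) :
    ∀ᵐ x ∂μ, |∫ y, w (x, y) * v y ∂μ| ≤ ‖w‖ * ‖v‖ := by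
  filter_upwards [Measure.ae_ae_of_ae_prod (Lp.ae_norm_le_norm_top w)] with x hx
  exact abs_integral_mul_le_of_ae_abs_le hx v

theorem integrable_mul_integral_kernel_mul (v h : Lp ℝ 2 μ) :
    Integrable (fun x => h x * ∫ y, w (x, y) * v y ∂μ) μ :=
  ((Lp.memLp h).integrable one_le_two).mul_bdd (aestronglyMeasurable_integral_kernel_mul w v)
    ((ae_abs_integral_kernel_mul_le w v).mono fun _ hx => hx)

theorem integral_kernel_mul_add_left (u v h : Lp ℝ 2 μ) :
    ∫ x, h x * ∫ y, w (x, y) * (u + v) y ∂μ ∂μ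
      = ∫ x, h x * ∫ y, w (x, y) * u y ∂μ ∂μ + ∫ x, h x * ∫ y, w (x, y) * v y ∂μ ∂μ := by
  rw [← integral_add (integrable_mul_integral_kernel_mul w u h)
    (integrable_mul_integral_kernel_mul w v h)]
  refine integral_congr_ae ?_
  filter_upwards [ae_integrable_kernel_mul w u, ae_integrable_kernel_mul w v] with x hu hv
  rw [← mul_add, ← integral_add hu hv]
  congr 1
  refine integral_congr_ae ?_
  filter_upwards [Lp.coeFn_add u v] with y hy
  rw [hy, Pi.add_apply, mul_add]

omit [IsProbabilityMeasure μ] in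
theorem integral_kernel_mul_smul_left (c : ℝ) (v h : Lp ℝ 2 μ) :
    ∫ x, h x * ∫ y, w (x, y) * (c • v) y ∂μ ∂μ = c * ∫ x, h x * ∫ y, w (x, y) * v y ∂μ ∂μ := by
  rw [← integral_const_mul]
  refine integral_congr_ae (.of_forall fun x => ?_)
  dsimp only
  rw [mul_left_comm, ← integral_const_mul c]
  congr 1
  refine integral_congr_ae ?_
  filter_upwards [Lp.coeFn_smul c v] with y hy
  rw [hy, Pi.smul_apply, smul_eq_mul, mul_left_comm]

theorem integral_kernel_mul_add_right (v g h : Lp ℝ 2 μ) :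
    ∫ x, (g + h) x * ∫ y, w (x, y) * v y ∂μ ∂μ
      = ∫ x, g x * ∫ y, w (x, y) * v y ∂μ ∂μ + ∫ x, h x * ∫ y, w (x, y) * v y ∂μ ∂μ := by
  rw [← integral_add (integrable_mul_integral_kernel_mul w v g)
    (integrable_mul_integral_kernel_mul w v h)]
  refine integral_congr_ae ?_
  filter_upwards [Lp.coeFn_add g h] with x hx
  rw [hx, Pi.add_apply, add_mul]

omit [IsProbabilityMeasure μ] in
theorem integral_kernel_mul_smul_right (c : ℝ) (v h : Lp ℝ 2 μ) :
    ∫ x, (c • h) x * ∫ y, w (x, y) * v y ∂μ ∂μ = c * ∫ x, h x * ∫ y, w (x, y) * v y ∂μ ∂μ := by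
  rw [← integral_const_mul]
  refine integral_congr_ae ?_
  filter_upwards [Lp.coeFn_smul c h] with x hx
  rw [hx, Pi.smul_apply, smul_eq_mul, mul_assoc]

theorem abs_integral_kernel_mul_le (v h : Lp ℝ 2 μ) :
    |∫ x, h x * ∫ y, w (x, y) * v y ∂μ ∂μ| ≤ ‖w‖ * ‖v‖ * ‖h‖ := by
  simp_rw [mul_comm (h _)]
  exact abs_integral_mul_le_of_ae_abs_le (ae_abs_integral_kernel_mul_le w v) h

noncomputable def kernelForm : Lp ℝ 2 μ →L[ℝ] Lp ℝ 2 μ →L[ℝ] ℝ :=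
  (LinearMap.mk₂ ℝ (fun v h : Lp ℝ 2 μ => ∫ x, h x * ∫ y, w (x, y) * v y ∂μ ∂μ)
    (integral_kernel_mul_add_left w) (integral_kernel_mul_smul_left w)
    (integral_kernel_mul_add_right w) (integral_kernel_mul_smul_right w)).mkContinuous₂ ‖w‖
    fun v h => (Real.norm_eq_abs _).trans_le (abs_integral_kernel_mul_le w v h)

theorem kernelForm_apply (v h : Lp ℝ 2 μ) :
    kernelForm w v h = ∫ x, h x * ∫ y, w (x, y) * v y ∂μ ∂μ := rfl

end KernelForm

theorem ContinuousOn.aestronglyMeasurable_of_retraction {Y β : Type*} [TopologicalSpace Y]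
    [MeasurableSpace Y] [OpensMeasurableSpace Y] [TopologicalSpace β]
    [TopologicalSpace.PseudoMetrizableSpace β] [SecondCountableTopologyEither Y β]
    {ν : Measure Y} {Φ : Y → β} {S : Set Y} (hΦ : ContinuousOn Φ S) {r : Y → Y}
    (hr : Continuous r) (hrS : ∀ y, r y ∈ S) (hr_eq : ∀ y ∈ S, r y = y)
    (hν : ∀ᵐ y ∂ν, y ∈ S) : AEStronglyMeasurable Φ ν :=
  (hΦ.comp_continuous hr hrS).aestronglyMeasurable.congr
    (hν.mono fun y hy => by simp only [Function.comp_apply, hr_eq y hy])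

section LinftyBall

variable {X : Type*} [MeasurableSpace X] {μ : Measure X} {M : ℝ}

variable (μ M) in
def linftyBall : Set (Lp ℝ 2 μ) := {u | ∀ᵐ x ∂μ, |u x| ≤ M}

theorem mem_linftyBall {u : Lp ℝ 2 μ} : u ∈ linftyBall μ M ↔ ∀ᵐ x ∂μ, |u x| ≤ M := Iff.rfl

theorem mem_linftyBall_of_eLpNorm_le (hM : 0 ≤ M) {u : Lp ℝ 2 μ}
    (hu : eLpNorm u ⊤ μ ≤ ENNReal.ofReal M) : u ∈ linftyBall μ M := by
  rw [eLpNorm_exponent_top] at hu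
  filter_upwards [ae_le_eLpNormEssSup (f := ⇑u) (μ := μ)] with x hx
  simpa [ENNReal.toReal_ofReal hM] using ENNReal.toReal_mono ENNReal.ofReal_ne_top (hx.trans hu)

theorem norm_le_of_mem_linftyBall [IsProbabilityMeasure μ] (hM : 0 ≤ M) {u : Lp ℝ 2 μ}
    (hu : u ∈ linftyBall μ M) : ‖u‖ ≤ M := by
  simpa [measureUnivNNReal] using Lp.norm_le_of_ae_bound hM
    ((mem_linftyBall.1 hu).mono fun x hx => (Real.norm_eq_abs (u x)).trans_le hx)

theorem ae_norm_pow_le_of_mem_linftyBall {u : Lp ℝ 2 μ} (hu : u ∈ linftyBall μ M) (k : ℕ) :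
    ∀ᵐ x ∂μ, ‖u x ^ k‖ ≤ M ^ k :=
  (mem_linftyBall.1 hu).mono fun x hx => by
    rw [Real.norm_eq_abs, abs_pow]
    exact pow_le_pow_left₀ (abs_nonneg _) hx k

theorem integrable_pow_of_mem_linftyBall [IsFiniteMeasure μ] {u : Lp ℝ 2 μ}
    (hu : u ∈ linftyBall μ M) (k : ℕ) : Integrable (fun x => u x ^ k) μ :=
  .of_bound (by fun_prop) (M ^ k) (ae_norm_pow_le_of_mem_linftyBall hu k)

theorem lipschitzWith_max_neg_min (M : ℝ) : LipschitzWith 1 fun t : ℝ => max (-M) (min M t) :=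
  (LipschitzWith.id.const_min M).const_max (-M)

noncomputable def clampLp (hM : 0 ≤ M) : Lp ℝ 2 μ → Lp ℝ 2 μ :=
  (lipschitzWith_max_neg_min M).compLp (by simp [hM])

theorem continuous_clampLp (hM : 0 ≤ M) : Continuous (clampLp (μ := μ) hM) :=
  (lipschitzWith_max_neg_min M).continuous_compLp _

theorem clampLp_mem_linftyBall (hM : 0 ≤ M) (u : Lp ℝ 2 μ) : clampLp hM u ∈ linftyBall μ M := by
  filter_upwards [(lipschitzWith_max_neg_min M).coeFn_compLp (by simp [hM]) u] with x hx
  rw [clampLp, hx, abs_le]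
  exact ⟨le_max_left _ _, max_le (by linarith) (min_le_left _ _)⟩

theorem clampLp_of_mem (hM : 0 ≤ M) {u : Lp ℝ 2 μ} (hu : u ∈ linftyBall μ M) :
    clampLp hM u = u := by
  refine Lp.ext ?_
  filter_upwards [(lipschitzWith_max_neg_min M).coeFn_compLp (by simp [hM]) u, hu] with x hx hux
  rw [clampLp, hx, Function.comp_apply, min_eq_right (abs_le.1 hux).2,
    max_eq_right (abs_le.1 hux).1]

theorem aestronglyMeasurable_of_continuousOn_linftyBall_prod (hM : 0 ≤ M)
    [MeasurableSpace (Lp ℝ 2 μ × Lp ℝ 2 μ)] [BorelSpace (Lp ℝ 2 μ × Lp ℝ 2 μ)]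
    {ν : Measure (Lp ℝ 2 μ × Lp ℝ 2 μ)} {Φ : Lp ℝ 2 μ × Lp ℝ 2 μ → ℝ}
    (hΦ : ContinuousOn Φ (linftyBall μ M ×ˢ linftyBall μ M))
    (hν : ∀ᵐ f ∂ν, f ∈ linftyBall μ M ×ˢ linftyBall μ M) : AEStronglyMeasurable Φ ν :=
  hΦ.aestronglyMeasurable_of_retraction ((continuous_clampLp hM).prodMap (continuous_clampLp hM))
    (fun f => ⟨clampLp_mem_linftyBall hM f.1, clampLp_mem_linftyBall hM f.2⟩)
    (fun _ hf => Prod.ext (clampLp_of_mem hM hf.1) (clampLp_of_mem hM hf.2)) hν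

end LinftyBall

section Functionals

variable {p : ℕ} [Fact p.Prime] {N : ℕ} [MeasurableSpace (PSpace p N)]
  {μ : Measure (PSpace p N)} [IsProbabilityMeasure μ] {M : ℝ}

theorem abs_quart_le {u : Lp ℝ 2 μ} (hu : u ∈ linftyBall μ M) : |quart μ u| ≤ M ^ 4 := by
  rw [quart, ← Real.norm_eq_abs]
  have h := norm_integral_le_of_norm_le_const (ae_norm_pow_le_of_mem_linftyBall hu 4)
  rwa [probReal_univ, mul_one] at h

theorem abs_quart_sub_le {u v : Lp ℝ 2 μ} (hu : u ∈ linftyBall μ M) (hv : v ∈ linftyBall μ M) :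
    |quart μ u - quart μ v| ≤ 4 * M ^ 3 * ‖u - v‖ := by
  rw [quart, quart, ← integral_sub (integrable_pow_of_mem_linftyBall hu 4)
    (integrable_pow_of_mem_linftyBall hv 4)]
  calc |∫ x, (u x ^ 4 - v x ^ 4) ∂μ| ≤ ∫ x, 4 * M ^ 3 * |(u - v) x| ∂μ := by
        rw [← Real.norm_eq_abs]
        refine norm_integral_le_of_norm_le
          (((Lp.memLp (u - v)).integrable one_le_two).abs.const_mul _) ?_
        filter_upwards [hu, hv, Lp.coeFn_sub u v] with x hux hvx hx
        rw [hx, Pi.sub_apply, Real.norm_eq_abs]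
        refine (abs_pow_sub_pow_le _ _ 4).trans ?_
        have : max |u x| |v x| ^ 3 ≤ M ^ 3 :=
          pow_le_pow_left₀ ((abs_nonneg _).trans (le_max_left _ _)) (max_le hux hvx) 3
        push_cast
        nlinarith [abs_nonneg (u x - v x)]
    _ ≤ 4 * M ^ 3 * ‖u - v‖ := by
        rw [integral_const_mul]
        have hM : 0 ≤ M := (mem_linftyBall.1 hu).exists.elim fun x hx => (abs_nonneg _).trans hx
        gcongr
        exact integral_abs_le_norm (u - v)

theorem continuousOn_quart : ContinuousOn (fun u : Lp ℝ 2 μ => quart μ u) (linftyBall μ M) :=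
  (LipschitzOnWith.of_dist_le' (K := 4 * M ^ 3) fun u hu v hv => by
    simpa [Real.dist_eq, dist_eq_norm] using abs_quart_sub_le hu hv).continuousOn

end Functionals

section Energy

variable {p : ℕ} [Fact p.Prime] {N : ℕ} [MeasurableSpace (PSpace p N)]
  {μ : Measure (PSpace p N)} [IsProbabilityMeasure μ]
  (a b : Lp ℝ ⊤ μ) (w : Lp ℝ ⊤ (μ.prod μ))

theorem espin_eq_kernelForm (v h : Lp ℝ 2 μ) :
    espin μ a b w v h = -kernelForm w v h - ∫ x, a x * v x ∂μ - ∫ x, b x * h x ∂μ := rfl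

theorem continuous_espin : Continuous fun f : Lp ℝ 2 μ × Lp ℝ 2 μ => espin μ a b w f.1 f.2 := by
  simp only [espin_eq_kernelForm]
  have ha := continuous_integral_mul ((Lp.memLp a).mono_exponent (p := 2) le_top)
  have hb := continuous_integral_mul ((Lp.memLp b).mono_exponent (p := 2) le_top)
  exact ((kernelForm w).continuous₂.neg.sub (ha.comp continuous_fst)).sub (hb.comp continuous_snd)

theorem abs_espin_le (v h : Lp ℝ 2 μ) :
    |espin μ a b w v h| ≤ ‖w‖ * ‖v‖ * ‖h‖ + ‖a‖ * ‖v‖ + ‖b‖ * ‖h‖ := by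
  have hw := abs_le.1 (abs_integral_kernel_mul_le w v h)
  have ha := abs_le.1 (abs_integral_mul_le_of_ae_abs_le (Lp.ae_norm_le_norm_top a) v)
  have hb := abs_le.1 (abs_integral_mul_le_of_ae_abs_le (Lp.ae_norm_le_norm_top b) h)
  rw [espin_eq_kernelForm, kernelForm_apply, abs_le]
  constructor <;> linarith

end Energy

theorem stmt14_general {p : ℕ} [Fact p.Prime] {N : ℕ}
    [MeasurableSpace (PSpace p N)]
    (μ : Measure (PSpace p N)) [IsProbabilityMeasure μ]
    (M : ℝ) (hM : 0 < M)
    [MeasurableSpace (Lp ℝ 2 μ × Lp ℝ 2 μ)] [BorelSpace (Lp ℝ 2 μ × Lp ℝ 2 μ)]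
    (ν : Measure (Lp ℝ 2 μ × Lp ℝ 2 μ)) [IsFiniteMeasure ν]
    (hν : ∀ᵐ f : Lp ℝ 2 μ × Lp ℝ 2 μ ∂ν, eLpNorm (⇑(f.1)) ⊤ μ ≤ ENNReal.ofReal M ∧
      eLpNorm (⇑(f.2)) ⊤ μ ≤ ENNReal.ofReal M)
    (a b : Lp ℝ ⊤ μ) (w : Lp ℝ ⊤ (μ.prod μ)) (c d : ℝ)
    (m n : ℕ) (φ : Fin m → Lp ℝ 2 μ) (θ : Fin n → Lp ℝ 2 μ) :
    Summable (fun ij : ℕ × ℕ =>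
      |(-1 : ℝ) ^ (ij.1 + ij.2) * c ^ ij.1 * d ^ ij.2 /
          ((Nat.factorial ij.1 : ℝ) * (Nat.factorial ij.2 : ℝ)) *
        ∫ f : Lp ℝ 2 μ × Lp ℝ 2 μ,
          ((∏ k, ∫ x, φ k x * f.1 x ∂μ) * ∏ l, ∫ x, θ l x * f.2 x ∂μ) *
            (quart μ (⇑(f.1)) ^ ij.1 * quart μ (⇑(f.2)) ^ ij.2 *
              Real.exp (-espin μ (⇑a) (⇑b) (⇑w) (⇑(f.1)) (⇑(f.2)))) ∂ν|) ∧
    iterPD2 (fun st : (Fin m → ℝ) × (Fin n → ℝ) =>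
        ∫ f : Lp ℝ 2 μ × Lp ℝ 2 μ,
          Real.exp (-espin μ (⇑a) (⇑b) (⇑w) (⇑(f.1)) (⇑(f.2))
            - c * quart μ (⇑(f.1)) - d * quart μ (⇑(f.2))
            + (∑ i, st.1 i * ∫ x, φ i x * f.1 x ∂μ)
            + ∑ j, st.2 j * ∫ x, θ j x * f.2 x ∂μ) ∂ν) (0, 0)
      = ∑' ij : ℕ × ℕ,
          (-1 : ℝ) ^ (ij.1 + ij.2) * c ^ ij.1 * d ^ ij.2 /
              ((Nat.factorial ij.1 : ℝ) * (Nat.factorial ij.2 : ℝ)) *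
            ∫ f : Lp ℝ 2 μ × Lp ℝ 2 μ,
              ((∏ k, ∫ x, φ k x * f.1 x ∂μ) * ∏ l, ∫ x, θ l x * f.2 x ∂μ) *
                (quart μ (⇑(f.1)) ^ ij.1 * quart μ (⇑(f.2)) ^ ij.2 *
                  Real.exp (-espin μ (⇑a) (⇑b) (⇑w) (⇑(f.1)) (⇑(f.2)))) ∂ν := by
  have hball : ∀ᵐ f ∂ν, f ∈ linftyBall μ M ×ˢ linftyBall μ M := hν.mono fun f hf =>
    ⟨mem_linftyBall_of_eLpNorm_le hM.le hf.1, mem_linftyBall_of_eLpNorm_le hM.le hf.2⟩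
  have hnorm : ∀ᵐ f ∂ν, ‖f.1‖ ≤ M ∧ ‖f.2‖ ≤ M := hball.mono fun f hf =>
    ⟨norm_le_of_mem_linftyBall hM.le hf.1, norm_le_of_mem_linftyBall hM.le hf.2⟩
  have hespin : ∀ᵐ f ∂ν, -espin μ a b w f.1 f.2 ≤ ‖w‖ * M * M + ‖a‖ * M + ‖b‖ * M :=
    hnorm.mono fun f hf => (neg_le_abs _).trans <| (abs_espin_le a b w f.1 f.2).trans <| by
      have := hM.le
      gcongr
      exacts [hf.1, hf.2, hf.1, hf.2]
  have hpairing : ∀ g : Lp ℝ 2 μ, Continuous fun v : Lp ℝ 2 μ => ∫ x, g x * v x ∂μ :=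
    fun g => continuous_integral_mul (Lp.memLp g)
  exact iterPD2_integral_exp_eq_tsum (A := fun k => ‖φ k‖ * M) (B := fun l => ‖θ l‖ * M)
    (continuous_espin a b w).neg.aestronglyMeasurable
    (aestronglyMeasurable_of_continuousOn_linftyBall_prod hM.le
      (continuousOn_quart.comp continuousOn_fst fun _ hf => hf.1) hball)
    (aestronglyMeasurable_of_continuousOn_linftyBall_prod hM.le
      (continuousOn_quart.comp continuousOn_snd fun _ hf => hf.2) hball)
    (fun k => ((hpairing (φ k)).comp continuous_fst).aestronglyMeasurable)
    (fun l => ((hpairing (θ l)).comp continuous_snd).aestronglyMeasurable) hespin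
    (hball.mono fun f hf => abs_quart_le hf.1) (hball.mono fun f hf => abs_quart_le hf.2)
    (fun k => hnorm.mono fun f hf => (abs_integral_mul_le _ _).trans (by gcongr; exact hf.1))
    (fun l => hnorm.mono fun f hf => (abs_integral_mul_le _ _).trans (by gcongr; exact hf.2)) c d

/-- perturbative expansion of the correlation functions in the coupling
parameters `c`, `d`: the iterated derivative at `(s,t) = (0,0)` of
`(s,t) ↦ ∫ exp(−E^spin − cU − dV + Σ s_i ⟨φ_i,v⟩ + Σ t_j ⟨θ_j,h⟩) dν` equals
`Σ_{i,j} ((−1)^{i+j} c^i d^j/(i!j!)) ∫ ∏⟨φ_k,v⟩ ∏⟨θ_l,h⟩ U^i V^j e^{−E^spin} dν`,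
the double series converging absolutely. -/
theorem stmt14 {p : ℕ} [Fact p.Prime] {N : ℕ} (hN : 1 ≤ N)
    [MeasurableSpace (PSpace p N)] [BorelSpace (PSpace p N)]
    (μ : Measure (PSpace p N)) [IsProbabilityMeasure μ] [μ.IsAddLeftInvariant]
    (M : ℝ) (hM : 0 < M)
    [MeasurableSpace (Lp ℝ 2 μ × Lp ℝ 2 μ)] [BorelSpace (Lp ℝ 2 μ × Lp ℝ 2 μ)]
    (ν : Measure (Lp ℝ 2 μ × Lp ℝ 2 μ)) [IsFiniteMeasure ν]
    (hν : ∀ᵐ f : Lp ℝ 2 μ × Lp ℝ 2 μ ∂ν, eLpNorm (⇑(f.1)) ⊤ μ ≤ ENNReal.ofReal M ∧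
      eLpNorm (⇑(f.2)) ⊤ μ ≤ ENNReal.ofReal M)
    (a b : Lp ℝ ⊤ μ) (w : Lp ℝ ⊤ (μ.prod μ)) (c d : ℝ)
    (m n : ℕ) (φ : Fin m → Lp ℝ 2 μ) (θ : Fin n → Lp ℝ 2 μ) :
    Summable (fun ij : ℕ × ℕ =>
      |(-1 : ℝ) ^ (ij.1 + ij.2) * c ^ ij.1 * d ^ ij.2 /
          ((Nat.factorial ij.1 : ℝ) * (Nat.factorial ij.2 : ℝ)) *
        ∫ f : Lp ℝ 2 μ × Lp ℝ 2 μ,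
          ((∏ k, ∫ x, φ k x * f.1 x ∂μ) * ∏ l, ∫ x, θ l x * f.2 x ∂μ) *
            (quart μ (⇑(f.1)) ^ ij.1 * quart μ (⇑(f.2)) ^ ij.2 *
              Real.exp (-espin μ (⇑a) (⇑b) (⇑w) (⇑(f.1)) (⇑(f.2)))) ∂ν|) ∧
    iterPD2 (fun st : (Fin m → ℝ) × (Fin n → ℝ) =>
        ∫ f : Lp ℝ 2 μ × Lp ℝ 2 μ,
          Real.exp (-espin μ (⇑a) (⇑b) (⇑w) (⇑(f.1)) (⇑(f.2))
            - c * quart μ (⇑(f.1)) - d * quart μ (⇑(f.2))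
            + (∑ i, st.1 i * ∫ x, φ i x * f.1 x ∂μ)
            + ∑ j, st.2 j * ∫ x, θ j x * f.2 x ∂μ) ∂ν) (0, 0)
      = ∑' ij : ℕ × ℕ,
          (-1 : ℝ) ^ (ij.1 + ij.2) * c ^ ij.1 * d ^ ij.2 /
              ((Nat.factorial ij.1 : ℝ) * (Nat.factorial ij.2 : ℝ)) *
            ∫ f : Lp ℝ 2 μ × Lp ℝ 2 μ,
              ((∏ k, ∫ x, φ k x * f.1 x ∂μ) * ∏ l, ∫ x, θ l x * f.2 x ∂μ) *
                (quart μ (⇑(f.1)) ^ ij.1 * quart μ (⇑(f.2)) ^ ij.2 *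
                  Real.exp (-espin μ (⇑a) (⇑b) (⇑w) (⇑(f.1)) (⇑(f.2)))) ∂ν :=
  stmt14_general μ M hM ν hν a b w c d m n φ θ
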